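/- arXiv:quant-ph/0007051 — 2 statements merged into one kernel-verified Lean document; each statement's English description precedes it below -/
import Mathlib

section
/- For every δ ∈ [0,1] and every c ∈ (0,1): H₂(δ) − δ·log₂(1/c) ≤ log₂(1+c) − 0, equivalently 2^{H₂(δ)} · c^{δ} ≤ 1 + c. -/
/-- The binary entropy function. -/
noncomputable def binEnt (x : ℝ) : ℝ := -x * Real.logb 2 x - (1 - x) * Real.logb 2 (1 - x)

/-!
Writing `2 ^ H₂(δ) = δ ^ (-δ) (1 - δ) ^ (-(1 - δ))`, the quantity `2 ^ H₂(δ) a ^ δ b ^ (1 - δ)` is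
the weighted geometric mean of `a / δ` and `b / (1 - δ)` with weights `δ` and `1 - δ`, so weighted
AM–GM bounds it by `δ (a / δ) + (1 - δ) (b / (1 - δ)) ≤ a + b`. Taking `a = c`, `b = 1` gives the
claim. With the conventions `0 ^ 0 = 1` and `x / 0 = 0` no case distinction at the endpoints
`δ ∈ {0, 1}` is needed.
-/

open Real

lemma rpow_neg_mul_logb_self {b x : ℝ} (hb : 0 < b) (hb₁ : b ≠ 1) (hx : 0 ≤ x) :
    b ^ (-x * logb b x) = x ^ (-x) := by
  rcases hx.eq_or_lt with rfl | hx
  · simp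
  rw [mul_comm, rpow_mul hb.le, rpow_logb hb hb₁ hx]

lemma two_rpow_binEnt {δ : ℝ} (h₀ : 0 ≤ δ) (h₁ : δ ≤ 1) :
    (2 : ℝ) ^ binEnt δ = δ ^ (-δ) * (1 - δ) ^ (-(1 - δ)) := by
  rw [binEnt, sub_eq_add_neg, ← neg_mul, rpow_add two_pos,
    rpow_neg_mul_logb_self two_pos (by norm_num) h₀,
    rpow_neg_mul_logb_self two_pos (by norm_num) (sub_nonneg.2 h₁)]

lemma mul_div_le_of_nonneg {w a : ℝ} (hw : 0 ≤ w) (ha : 0 ≤ a) : w * (a / w) ≤ a := by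
  rcases hw.eq_or_lt with rfl | hw
  · simpa using ha
  · rw [mul_div_cancel₀ a hw.ne']

lemma rpow_div_mul_rpow_div_le_add {w a b : ℝ} (h₀ : 0 ≤ w) (h₁ : w ≤ 1) (ha : 0 ≤ a)
    (hb : 0 ≤ b) : (a / w) ^ w * (b / (1 - w)) ^ (1 - w) ≤ a + b :=
  calc (a / w) ^ w * (b / (1 - w)) ^ (1 - w) ≤ w * (a / w) + (1 - w) * (b / (1 - w)) :=
        geom_mean_le_arith_mean2_weighted h₀ (sub_nonneg.2 h₁) (div_nonneg ha h₀)
          (div_nonneg hb (sub_nonneg.2 h₁)) (by ring)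
    _ ≤ a + b := add_le_add (mul_div_le_of_nonneg h₀ ha) (mul_div_le_of_nonneg (sub_nonneg.2 h₁) hb)

lemma two_rpow_binEnt_mul_rpow_mul_rpow_le {δ a b : ℝ} (h₀ : 0 ≤ δ) (h₁ : δ ≤ 1) (ha : 0 ≤ a)
    (hb : 0 ≤ b) : (2 : ℝ) ^ binEnt δ * a ^ δ * b ^ (1 - δ) ≤ a + b := by
  have h₁' : 0 ≤ 1 - δ := sub_nonneg.2 h₁
  calc (2 : ℝ) ^ binEnt δ * a ^ δ * b ^ (1 - δ) = (a / δ) ^ δ * (b / (1 - δ)) ^ (1 - δ) := by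
        rw [two_rpow_binEnt h₀ h₁, div_rpow ha h₀, div_rpow hb h₁', rpow_neg h₀, rpow_neg h₁']
        ring
    _ ≤ a + b := rpow_div_mul_rpow_div_le_add h₀ h₁ ha hb

theorem entropy_exp_inequality (δ c : ℝ) (hδ : δ ∈ Set.Icc (0 : ℝ) 1)
    (hc : c ∈ Set.Ioo (0 : ℝ) 1) :
    (2 : ℝ) ^ (binEnt δ) * c ^ δ ≤ 1 + c := by
  simpa [add_comm] using two_rpow_binEnt_mul_rpow_mul_rpow_le hδ.1 hδ.2 hc.1.le zero_le_one
end

section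
/- For c ∈ (0,1) and rates R ≤ R_ex = 1 − H₂(c/(1+c)), the minimum of f(δ) = δ·log₂(1/c) − H₂(δ) + 1 − R over δ ∈ [H₂^{-1}(1−R), 1] is attained at δ = H₂^{-1}(1−R) and equals log₂(1/c)·H₂^{-1}(1−R), where H₂^{-1} is the inverse of H₂ on [0,1/2]. -/
/-!
The derivative of `δ ↦ δ log(1/c) - H(δ)` is `log(1/c) - log((1 - δ)/δ)`, which is nonnegative
exactly when `δ ≥ c/(1+c)`. So the function is nondecreasing on `[δ_GV, 1]` and its minimum there
is its value at `δ_GV`, where `H(δ_GV) = 1 - R` cancels the constant term.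
-/

open Real Set

lemma binEnt_eq_binEntropy_div_log_two (x : ℝ) : binEnt x = binEntropy x / log 2 := by
  simp only [binEnt, binEntropy, logb, log_inv]
  ring

lemma log_one_sub_sub_log_le_log_one_div {c x : ℝ} (hc : 0 < c) (hx : c / (1 + c) < x)
    (hx₁ : x < 1) : log (1 - x) - log x ≤ log (1 / c) := by
  have hx₀ : 0 < x := (div_pos hc (by linarith)).trans hx
  have hcx : c * (1 - x) ≤ x := by
    have := (div_lt_iff₀ (by linarith : (0 : ℝ) < 1 + c)).mp hx
    linarith
  have hlog := log_le_log (by nlinarith) hcx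
  rw [log_mul hc.ne' (by linarith)] at hlog
  rw [one_div, log_inv]
  linarith

lemma monotoneOn_mul_log_one_div_sub_binEntropy {c : ℝ} (hc : 0 < c) :
    MonotoneOn (fun x ↦ x * log (1 / c) - binEntropy x) (Icc (c / (1 + c)) 1) := by
  have hpos : 0 < c / (1 + c) := div_pos hc (by linarith)
  refine monotoneOn_of_hasDerivWithinAt_nonneg (convex_Icc _ _)
    (f' := fun x ↦ log (1 / c) - (log (1 - x) - log x))
    ((continuous_id.mul continuous_const).sub binEntropy_continuous).continuousOn
    (fun x hx ↦ ?_) (fun x hx ↦ ?_)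
  all_goals rw [interior_Icc] at hx
  · have hderiv := ((hasDerivAt_id x).mul_const (log (1 / c))).sub
      (hasDerivAt_binEntropy (hpos.trans hx.1).ne' hx.2.ne)
    simp only [id_eq, one_mul] at hderiv
    exact hderiv.hasDerivWithinAt
  · exact sub_nonneg.mpr (log_one_sub_sub_log_le_log_one_div hc hx.1 hx.2)

lemma monotoneOn_mul_logb_one_div_sub_binEnt {c : ℝ} (hc : 0 < c) :
    MonotoneOn (fun x ↦ x * logb 2 (1 / c) - binEnt x) (Icc (c / (1 + c)) 1) := by
  intro x hx y hy hxy
  have h := div_le_div_of_nonneg_right (monotoneOn_mul_log_one_div_sub_binEntropy hc hx hy hxy)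
    (log_pos one_lt_two).le
  simpa only [binEnt_eq_binEntropy_div_log_two, logb, sub_div, mul_div_assoc] using h

theorem expurgated_minimum_at_GV_general (c R δGV : ℝ) (hc : c ∈ Set.Ioo (0 : ℝ) 1)
    (hGV : binEnt δGV = 1 - R)
    (hR : c / (1 + c) ≤ δGV) :
    (∀ δ ∈ Set.Icc δGV 1,
      δ * Real.logb 2 (1 / c) - binEnt δ + (1 - R) ≥ δGV * Real.logb 2 (1 / c)) ∧
    δGV * Real.logb 2 (1 / c) - binEnt δGV + (1 - R) = δGV * Real.logb 2 (1 / c) := by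
  refine ⟨fun δ ⟨hδGV_le, hδ_le⟩ ↦ ?_, by rw [hGV]; ring⟩
  have hmono := monotoneOn_mul_logb_one_div_sub_binEnt hc.1
    ⟨hR, hδGV_le.trans hδ_le⟩ ⟨hR.trans hδGV_le, hδ_le⟩ hδGV_le
  simp only at hmono
  linarith

theorem expurgated_minimum_at_GV (c R δGV : ℝ) (hc : c ∈ Set.Ioo (0 : ℝ) 1)
    (hδGV : δGV ∈ Set.Icc (0 : ℝ) (1 / 2)) (hGV : binEnt δGV = 1 - R)
    (hR : c / (1 + c) ≤ δGV) :
    (∀ δ ∈ Set.Icc δGV 1,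
      δ * Real.logb 2 (1 / c) - binEnt δ + (1 - R) ≥ δGV * Real.logb 2 (1 / c)) ∧
    δGV * Real.logb 2 (1 / c) - binEnt δGV + (1 - R) = δGV * Real.logb 2 (1 / c) :=
  expurgated_minimum_at_GV_general c R δGV hc hGV hR
end
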